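/- Let p ≥ 2d and let S ⊆ {1,…,N} × {1,…,p} be such that for every i ∈ {1,…,p} the set S_i = {j ∈ {1,…,N} : (j,i) ∈ S} is nonempty. Then the 'bad set' F_S = {w = (w_1,…,w_p) ∈ V^p : ∃ x, y ∈ V with x ≁ y and Φ_{w_i,j}(x) = Φ_{w_i,j}(y) for all i ∈ {1,…,p} and all j ∈ S_i} has Lebesgue measure zero and is nowhere dense in V^p. Consequently, for almost every w ∈ V^p the coorbit map x ↦ (Φ_{w_i,j}(x))_{(j,i)∈S} satisfies: it takes equal values at x and y if and only if x ∼ y. -/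

import Mathlib

open scoped RealInnerProductSpace
open MeasureTheory

/-- `coorbit U w x j` is the `j`-th largest entry (with multiplicity, `1 ≤ j ≤ N = |G|`)
of the `N`-tuple `(⟨U_g w, x⟩)_{g ∈ G}`. -/
noncomputable def coorbit {d : ℕ} {G : Type} [Group G] [Fintype G]
    (U : G →* (EuclideanSpace ℝ (Fin d) ≃ₗᵢ[ℝ] EuclideanSpace ℝ (Fin d)))
    (w x : EuclideanSpace ℝ (Fin d)) (j : ℕ) : ℝ :=
  ((Finset.univ.val.map fun g : G => ⟪(U g) w, x⟫).sort (· ≤ ·)).getD (Fintype.card G - j) 0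

/-- `dhat U x y = min_{g ∈ G} ‖x − U_g y‖`, the orbit distance. -/
noncomputable def dhat {d : ℕ} {G : Type} [Group G] [Fintype G]
    (U : G →* (EuclideanSpace ℝ (Fin d) ≃ₗᵢ[ℝ] EuclideanSpace ℝ (Fin d)))
    (x y : EuclideanSpace ℝ (Fin d)) : ℝ :=
  Finset.univ.inf' Finset.univ_nonempty fun g : G => ‖x - (U g) y‖

set_option linter.unusedSectionVars false

open Function

lemma contCons {α : Type*} [TopologicalSpace α] {n : ℕ} :
    Continuous fun q : α × (Fin n → α) => (Fin.cons q.1 q.2 : Fin (n+1) → α) :=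
  continuous_pi fun j => Fin.cases continuous_fst
    (fun k => (continuous_apply k).comp continuous_snd) j

lemma contCons' {α : Type*} [TopologicalSpace α] {n : ℕ} :
    Continuous fun q : (Fin n → α) × α => (Fin.cons q.2 q.1 : Fin (n+1) → α) :=
  contCons.comp (continuous_snd.prodMk continuous_fst)

lemma contConsConst {α : Type*} [TopologicalSpace α] {n : ℕ} (a : α) :
    Continuous fun t : Fin n → α => (Fin.cons a t : Fin (n+1) → α) :=
  contCons.comp (Continuous.prodMk_right a)

lemma ml {d : ℕ} : ∀ (n : ℕ) (f : (Fin n → EuclideanSpace ℝ (Fin d)) → ℝ),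
    Continuous f →
    (∀ i, (∀ u a b (c : ℝ), f (Function.update u i (a + c • b)) =
        f (Function.update u i a) + c * f (Function.update u i b)) ∨
      (∀ u a, f (Function.update u i a) = f u)) →
    (∃ u₀, f u₀ ≠ 0) → volume {u | f u = 0} = 0 := by
  intro n
  induction n with
  | zero =>
    rintro f hf hslot ⟨u₀, hu₀⟩
    have : {u : Fin 0 → EuclideanSpace ℝ (Fin d) | f u = 0} = ∅ := by
      ext u
      simp only [Set.mem_setOf_eq, Set.mem_empty_iff_false, iff_false]
      have : u = u₀ := Subsingleton.elim _ _
      rw [this]; exact hu₀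
    rw [this]; simp
  | succ n IH =>
    rintro f hf hslot ⟨u₀, hu₀⟩
    have hcons : Continuous fun q : (Fin n → EuclideanSpace ℝ (Fin d)) × EuclideanSpace ℝ (Fin d)
        => f (Fin.cons q.2 q.1) := hf.comp contCons'
    have hBmeas : MeasurableSet {q : (Fin n → EuclideanSpace ℝ (Fin d)) × EuclideanSpace ℝ (Fin d)
        | f (Fin.cons q.2 q.1) = 0} :=
      (isClosed_eq hcons continuous_const).measurableSet
    have mp := measurePreserving_piFinSuccAbove
      (fun _ : Fin (n+1) => (volume : Measure (EuclideanSpace ℝ (Fin d)))) 0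
    set e := MeasurableEquiv.piFinSuccAbove (fun _ : Fin (n+1) => EuclideanSpace ℝ (Fin d)) 0
      with he
    have hA : MeasurableSet {q : EuclideanSpace ℝ (Fin d) × (Fin n → EuclideanSpace ℝ (Fin d))
        | f (Fin.cons q.1 q.2) = 0} :=
      (isClosed_eq (hf.comp contCons) continuous_const).measurableSet
    have hS : {u : Fin (n+1) → EuclideanSpace ℝ (Fin d) | f u = 0}
        = e ⁻¹' {q : EuclideanSpace ℝ (Fin d) × (Fin n → EuclideanSpace ℝ (Fin d))
            | f (Fin.cons q.1 q.2) = 0} := by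
      ext u
      have h1 : e u = (u 0, fun j => u ((0 : Fin (n+1)).succAbove j)) := rfl
      simp only [Set.mem_preimage, h1, Set.mem_setOf_eq]
      have h2 : (Fin.cons (u 0) fun j => u ((0 : Fin (n+1)).succAbove j)) = u := by
        have : (fun j => u ((0 : Fin (n+1)).succAbove j)) = Fin.tail u := by
          funext j; simp [Fin.tail, Fin.succAbove_zero]
        rw [this, Fin.cons_self_tail]
      rw [h2]
    rw [show (volume : Measure (Fin (n+1) → EuclideanSpace ℝ (Fin d)))
      = Measure.pi (fun _ => volume) from volume_pi, hS,
      mp.measure_preimage hA.nullMeasurableSet]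
    have hswap : ((volume : Measure (EuclideanSpace ℝ (Fin d))).prod
          (Measure.pi fun _ : Fin n => (volume : Measure (EuclideanSpace ℝ (Fin d)))))
        {q : EuclideanSpace ℝ (Fin d) × (Fin n → EuclideanSpace ℝ (Fin d))
            | f (Fin.cons q.1 q.2) = 0}
        = ((Measure.pi fun _ : Fin n => (volume : Measure (EuclideanSpace ℝ (Fin d)))).prod
            (volume : Measure (EuclideanSpace ℝ (Fin d))))
          {q : (Fin n → EuclideanSpace ℝ (Fin d)) × EuclideanSpace ℝ (Fin d)
            | f (Fin.cons q.2 q.1) = 0} := by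
      rw [← Measure.prod_swap, Measure.map_apply measurable_swap hA]
      rfl
    rw [hswap, Measure.measure_prod_null hBmeas]
    have gIH : volume {t : Fin n → EuclideanSpace ℝ (Fin d) | f (Fin.cons (u₀ 0) t) = 0} = 0 := by
      apply IH
      · exact hf.comp (contConsConst _)
      · intro i
        rcases hslot i.succ with h | h
        · left; intro u a b c
          simpa [← Fin.cons_update] using h (Fin.cons (u₀ 0) u) a b c
        · right; intro u a
          simpa [← Fin.cons_update] using h (Fin.cons (u₀ 0) u) a
      · exact ⟨Fin.tail u₀, by rw [Fin.cons_self_tail]; exact hu₀⟩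
    rw [volume_pi] at gIH
    have hae : ∀ᵐ t ∂(Measure.pi fun _ : Fin n => (volume : Measure (EuclideanSpace ℝ (Fin d)))),
        f (Fin.cons (u₀ 0) t) ≠ 0 := by
      have := measure_eq_zero_iff_ae_notMem.mp gIH
      filter_upwards [this] with t ht
      simpa using ht
    filter_upwards [hae] with t ht
    have hset : (Prod.mk t ⁻¹' {q : (Fin n → EuclideanSpace ℝ (Fin d)) × EuclideanSpace ℝ (Fin d)
        | f (Fin.cons q.2 q.1) = 0})
        = {a : EuclideanSpace ℝ (Fin d) | f (Fin.cons a t : Fin (n+1) → EuclideanSpace ℝ (Fin d)) = 0} :=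
      rfl
    rw [Pi.zero_apply, hset]
    rcases hslot 0 with h | h
    · have hupd : ∀ a : EuclideanSpace ℝ (Fin d),
          Function.update (Fin.cons (u₀ 0) t : Fin (n+1) → EuclideanSpace ℝ (Fin d)) 0 a = Fin.cons a t := by
        intro a; exact Fin.update_cons_zero _ _ _
      have hadd : ∀ a b : EuclideanSpace ℝ (Fin d), ∀ c : ℝ, f (Fin.cons (a + c • b) t)
          = f (Fin.cons a t) + c * f (Fin.cons b t) := by
        intro a b c
        have := h (Fin.cons (u₀ 0) t) a b c
        simpa [hupd] using this
      have h0 : f (Fin.cons (0 : EuclideanSpace ℝ (Fin d)) t) = 0 := by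
        have := hadd 0 0 1
        simp only [smul_zero, add_zero, one_mul] at this
        linarith
      set φ : EuclideanSpace ℝ (Fin d) →ₗ[ℝ] ℝ :=
        { toFun := fun a => f (Fin.cons a t)
          map_add' := by
            intro a b
            have := hadd a b 1
            simpa using this
          map_smul' := by
            intro c a
            have := hadd 0 a c
            simp only [zero_add] at this
            simpa [h0] using this } with hφ
      have hker : {a : EuclideanSpace ℝ (Fin d) | f (Fin.cons a t) = 0}
          = (LinearMap.ker φ : Submodule ℝ (EuclideanSpace ℝ (Fin d))) := by
        ext a; simp [hφ, LinearMap.mem_ker]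
      rw [hker]
      apply Measure.addHaar_submodule
      intro htop
      apply ht
      have : (u₀ 0) ∈ LinearMap.ker φ := by rw [htop]; trivial
      simpa [hφ] using this
    · have : {a : EuclideanSpace ℝ (Fin d) | f (Fin.cons a t) = 0} = ∅ := by
        ext a
        simp only [Set.mem_setOf_eq, Set.mem_empty_iff_false, iff_false]
        have h2 : f (Fin.cons a t) = f (Fin.cons (u₀ 0) t) := by
          have := h (Fin.cons (u₀ 0) t) a
          rwa [Fin.update_cons_zero] at this
        rw [h2]; exact ht
      rw [this]; simp


variable {d p : ℕ}

/-- the functional `z ↦ ⟪w i, T z i⟫` -/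
noncomputable def phiT
    (T : (EuclideanSpace ℝ (Fin d) × EuclideanSpace ℝ (Fin d)) →ₗ[ℝ]
      (Fin p → EuclideanSpace ℝ (Fin d)))
    (w : Fin p → EuclideanSpace ℝ (Fin d)) (i : Fin p) :
    Module.Dual ℝ (EuclideanSpace ℝ (Fin d) × EuclideanSpace ℝ (Fin d)) where
  toFun z := ⟪w i, T z i⟫
  map_add' z₁ z₂ := by
    show ⟪w i, T (z₁ + z₂) i⟫ = ⟪w i, T z₁ i⟫ + ⟪w i, T z₂ i⟫
    rw [map_add]
    exact inner_add_right _ _ _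
  map_smul' c z := by
    show ⟪w i, T (c • z) i⟫ = c • ⟪w i, T z i⟫
    rw [T.map_smul]
    exact real_inner_smul_right _ _ _

lemma phiT_apply (T : (EuclideanSpace ℝ (Fin d) × EuclideanSpace ℝ (Fin d)) →ₗ[ℝ]
      (Fin p → EuclideanSpace ℝ (Fin d)))
    (w : Fin p → EuclideanSpace ℝ (Fin d)) (i : Fin p) (z) :
    phiT T w i z = ⟪w i, T z i⟫ := rfl

lemma phiT_update_ne (T : (EuclideanSpace ℝ (Fin d) × EuclideanSpace ℝ (Fin d)) →ₗ[ℝ]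
      (Fin p → EuclideanSpace ℝ (Fin d)))
    (w : Fin p → EuclideanSpace ℝ (Fin d)) {i j : Fin p} (h : j ≠ i) (a) :
    phiT T (Function.update w i a) j = phiT T w j := by
  refine LinearMap.ext fun z => ?_
  rw [phiT_apply, phiT_apply, Function.update_of_ne h]

lemma key (hd : 1 ≤ d) (hp : 2 * d ≤ p)
    (T : (EuclideanSpace ℝ (Fin d) × EuclideanSpace ℝ (Fin d)) →ₗ[ℝ]
      (Fin p → EuclideanSpace ℝ (Fin d))) :
    ∃ f : (Fin p → EuclideanSpace ℝ (Fin d)) → ℝ,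
      Continuous f ∧
      (∀ i, (∀ u a b (c : ℝ), f (Function.update u i (a + c • b)) =
          f (Function.update u i a) + c * f (Function.update u i b)) ∨
        (∀ u a, f (Function.update u i a) = f u)) ∧
      (∃ u₀, f u₀ ≠ 0) ∧
      ∀ w z, (∀ i, T z i ≠ 0) → (∀ i, ⟪w i, T z i⟫ = 0) → f w = 0 := by
  classical
  set 𝒜 : Set (Finset (Fin p)) :=
    {R | ∃ w, LinearIndependent ℝ (fun i : R => phiT T w i)} with h𝒜
  have h𝒜ne : (∅ : Finset (Fin p)) ∈ 𝒜 := ⟨0, linearIndependent_empty_type⟩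
  obtain ⟨R, hR𝒜, hRmax⟩ := Set.Finite.exists_maximalFor Finset.card 𝒜 (Set.toFinite 𝒜)
    ⟨∅, h𝒜ne⟩
  have hmax : ∀ R' ∈ 𝒜, R'.card ≤ R.card := by
    intro R' hR'
    by_contra hlt
    push_neg at hlt
    have := hRmax hR' hlt.le
    omega
  obtain ⟨w₀, hw₀⟩ := hR𝒜
  set r := R.card with hr
  set eR : Fin r ≃o R := R.orderIsoOfFin rfl with heR
  set ρ : Fin r → Fin p := fun κ => (eR κ : Fin p) with hρ
  have hρinj : Function.Injective ρ := fun a b hab => by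
    have : (eR a : R) = eR b := Subtype.ext hab
    simpa using eR.injective this
  have hρmem : ∀ κ, ρ κ ∈ R := fun κ => (eR κ).2
  have li0 : LinearIndependent ℝ (fun κ : Fin r => phiT T w₀ (ρ κ)) :=
    hw₀.comp (fun κ => eR κ) (fun a b hab => eR.injective hab)
  -- surjectivity of the evaluation map at w₀
  have hsurj : Function.Surjective
      (LinearMap.pi (fun κ : Fin r => phiT T w₀ (ρ κ)) :
        (EuclideanSpace ℝ (Fin d) × EuclideanSpace ℝ (Fin d)) →ₗ[ℝ] (Fin r → ℝ)) := by
    by_contra hns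
    rw [← LinearMap.range_eq_top] at hns
    obtain ⟨ξ, hξ0, hξ⟩ := Submodule.exists_dual_map_eq_bot_of_lt_top
      (lt_top_iff_ne_top.mpr hns) inferInstance
    have hall : ∀ zz, ξ ((LinearMap.pi fun κ : Fin r => phiT T w₀ (ρ κ)) zz) = 0 := by
      intro zz
      have hm : ξ ((LinearMap.pi fun κ : Fin r => phiT T w₀ (ρ κ)) zz) ∈
          Submodule.map ξ (LinearMap.range (LinearMap.pi fun κ : Fin r => phiT T w₀ (ρ κ))) :=
        Submodule.mem_map_of_mem (LinearMap.mem_range_self _ zz)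
      rw [hξ] at hm
      simpa using hm
    set c : Fin r → ℝ := fun κ => ξ (Pi.single κ 1) with hcdef
    have hξrep : ∀ y : Fin r → ℝ, ξ y = ∑ κ, y κ * c κ := by
      intro y
      have hy : ∑ κ : Fin r, y κ • (Pi.single κ (1:ℝ) : Fin r → ℝ) = y := by
        have h1 : ∀ κ : Fin r, y κ • (Pi.single κ (1:ℝ) : Fin r → ℝ) = Pi.single κ (y κ) := by
          intro κ
          rw [← Pi.single_smul]
          simp
        simp_rw [h1]
        exact Finset.univ_sum_single y
      conv_lhs => rw [← hy]
      rw [map_sum]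
      simp [hcdef, smul_eq_mul]
    have hcomb : (∑ κ, c κ • phiT T w₀ (ρ κ)) = 0 := by
      refine LinearMap.ext fun zz => ?_
      have h2 := hall zz
      rw [hξrep] at h2
      simp only [LinearMap.pi_apply] at h2
      simpa [LinearMap.sum_apply, mul_comm, smul_eq_mul] using h2
    have hc0 : ∀ κ, c κ = 0 := Fintype.linearIndependent_iff.mp li0 c hcomb
    apply hξ0
    refine LinearMap.ext fun y => ?_
    rw [hξrep]
    simp [hc0]
  choose zdual hzdual using fun l : Fin r => hsurj (Pi.single l 1)
  -- the determinant function
  set f : (Fin p → EuclideanSpace ℝ (Fin d)) → ℝ :=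
    fun w => Matrix.det (Matrix.of fun κ l : Fin r => phiT T w (ρ κ) (zdual l)) with hfdef
  have hmatid : (Matrix.of fun κ l : Fin r => phiT T w₀ (ρ κ) (zdual l)) = 1 := by
    ext κ l
    have h3 := congrFun (hzdual l) κ
    simp only [LinearMap.pi_apply] at h3
    rw [Matrix.of_apply, h3, Matrix.one_apply, Pi.single_apply]
  refine ⟨f, ?_, ?_, ⟨w₀, ?_⟩, ?_⟩
  · -- continuity
    refine Continuous.matrix_det (continuous_matrix fun κ l => ?_)
    have hap : Continuous fun w : Fin p → EuclideanSpace ℝ (Fin d) => w (ρ κ) :=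
      continuous_apply (ρ κ)
    exact hap.inner continuous_const
  · -- slots
    intro i
    by_cases hi : i ∈ R
    · left
      intro u a b c
      set κ₀ : Fin r := eR.symm ⟨i, hi⟩ with hκ₀def
      have hρκ₀ : ρ κ₀ = i := by
        simp only [hρ, hκ₀def]
        rw [OrderIso.apply_symm_apply]
      have hMat : ∀ x : EuclideanSpace ℝ (Fin d),
          (Matrix.of fun κ l : Fin r => phiT T (Function.update u i x) (ρ κ) (zdual l))
          = Matrix.updateRow (Matrix.of fun κ l : Fin r => phiT T u (ρ κ) (zdual l)) κ₀
              (fun l => ⟪x, T (zdual l) i⟫) := by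
        intro x
        ext κ l
        by_cases hκ : κ = κ₀
        · subst hκ
          rw [Matrix.of_apply, Matrix.updateRow_self, phiT_apply, hρκ₀, Function.update_self]
        · rw [Matrix.of_apply, Matrix.updateRow_ne hκ, Matrix.of_apply]
          have : ρ κ ≠ i := fun hcon => hκ (by rw [← hρκ₀] at hcon; exact hρinj hcon)
          exact LinearMap.congr_fun (phiT_update_ne T u this x) (zdual l)
      have hrow : (fun l => ⟪a + c • b, T (zdual l) i⟫)
          = (fun l => ⟪a, T (zdual l) i⟫) + c • (fun l => ⟪b, T (zdual l) i⟫) := by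
        funext l
        simp [inner_add_left, real_inner_smul_left, Finset.mul_sum, mul_assoc]
      simp only [hfdef, hMat, hrow]
      rw [Matrix.det_updateRow_add, Matrix.det_updateRow_smul]
    · right
      intro u a
      have hne : ∀ κ, ρ κ ≠ i := fun κ hκ => hi (hκ ▸ hρmem κ)
      simp only [hfdef]
      congr 1
      ext κ l
      rw [Matrix.of_apply, Matrix.of_apply]
      exact LinearMap.congr_fun (phiT_update_ne T u (hne κ) a) (zdual l)
  · -- nonvanishing at w₀
    simp only [hfdef, hmatid, Matrix.det_one]
    exact one_ne_zero
  · -- vanishing on the bad set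
    intro w z hzne hw
    by_contra hfw
    have liw : LinearIndependent ℝ (fun κ : Fin r => phiT T w (ρ κ)) := by
      by_contra hdep
      rw [Fintype.not_linearIndependent_iff] at hdep
      obtain ⟨c, hc, κ₀, hκ₀⟩ := hdep
      apply hfw
      simp only [hfdef]
      rw [← Matrix.exists_vecMul_eq_zero_iff]
      refine ⟨c, fun hc0 => hκ₀ (by rw [hc0]; rfl), ?_⟩
      funext l
      have h4 := LinearMap.congr_fun hc (zdual l)
      simp only [LinearMap.sum_apply, LinearMap.smul_apply, LinearMap.zero_apply,
        smul_eq_mul] at h4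
      simp only [Matrix.vecMul, dotProduct, Matrix.of_apply, Pi.zero_apply]
      exact h4
    by_cases huniv : ∃ j, j ∉ R
    · obtain ⟨j, hj⟩ := huniv
      set w' := Function.update w j (T z j) with hw'def
      have hnotin : ¬ LinearIndependent ℝ
          (fun i : (insert j R : Finset (Fin p)) => phiT T w' i) := by
        intro hcontra
        have h5 : (insert j R : Finset (Fin p)) ∈ 𝒜 := ⟨w', hcontra⟩
        have h6 := hmax _ h5
        rw [Finset.card_insert_of_notMem hj] at h6
        omega
      rw [Fintype.not_linearIndependent_iff] at hnotin
      obtain ⟨c, hc, i₀, hi₀⟩ := hnotin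
      -- repackage the coefficients
      set cc : Fin p → ℝ := fun i => if h : i ∈ (insert j R : Finset (Fin p))
        then c ⟨i, h⟩ else 0 with hccdef
      have hcceq : ∀ i : (insert j R : Finset (Fin p)), c i = cc i := by
        rintro ⟨i, hi⟩
        simp only [hccdef]
        rw [dif_pos hi]
      have hsum : cc j • phiT T w' j + ∑ κ : Fin r, cc (ρ κ) • phiT T w (ρ κ) = 0 := by
        have h7 : ∑ i : (insert j R : Finset (Fin p)), cc i • phiT T w' i = 0 := by
          rw [← hc]
          exact Finset.sum_congr rfl fun i _ => by rw [hcceq i]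
        rw [Finset.sum_coe_sort (insert j R) (fun i => cc i • phiT T w' i)] at h7
        rw [Finset.sum_insert hj] at h7
        have h8 : ∑ i ∈ R, cc i • phiT T w' i = ∑ κ : Fin r, cc (ρ κ) • phiT T w (ρ κ) := by
          rw [← Finset.sum_coe_sort R (fun i => cc i • phiT T w' i)]
          refine (Fintype.sum_equiv eR.toEquiv _ _ fun κ => ?_).symm
          have h9 : ρ κ ≠ j := fun hcon => hj (hcon ▸ hρmem κ)
          show cc (ρ κ) • phiT T w (ρ κ) = cc (ρ κ) • phiT T w' (ρ κ)
          rw [hw'def, phiT_update_ne T w h9]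
        rw [h8] at h7
        exact h7
      -- evaluate at z to get `cc j = 0`
      have hccj : cc j = 0 := by
        have h10 := LinearMap.congr_fun hsum z
        simp only [LinearMap.add_apply, LinearMap.sum_apply, LinearMap.smul_apply,
          LinearMap.zero_apply, smul_eq_mul, phiT_apply] at h10
        have h11 : ∀ κ : Fin r, cc (ρ κ) * ⟪w (ρ κ), T z (ρ κ)⟫ = 0 := by
          intro κ; rw [hw (ρ κ), mul_zero]
        rw [Finset.sum_congr rfl (fun κ _ => h11 κ), Finset.sum_const_zero, add_zero] at h10
        have h12 : w' j = T z j := by rw [hw'def, Function.update_self]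
        rw [h12] at h10
        have h13 : ⟪T z j, T z j⟫ ≠ 0 := fun hcon => hzne j (inner_self_eq_zero.mp hcon)
        exact (mul_eq_zero.mp h10).resolve_right h13
      -- hence a dependency over `R`, so all coefficients vanish
      have hres : ∑ κ : Fin r, cc (ρ κ) • phiT T w (ρ κ) = 0 := by
        rw [hccj, zero_smul, zero_add] at hsum
        exact hsum
      have hall0 : ∀ κ, cc (ρ κ) = 0 := Fintype.linearIndependent_iff.mp liw _ hres
      apply hi₀
      rw [hcceq i₀]
      rcases Finset.mem_insert.mp i₀.2 with h14 | h14
      · have : (i₀ : Fin p) = j := h14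
        rw [this]
        exact hccj
      · have : (i₀ : Fin p) = ρ (eR.symm ⟨i₀, h14⟩) := by
          simp only [hρ]
          rw [OrderIso.apply_symm_apply]
        rw [this]
        exact hall0 _
    · -- `R = univ`; the functionals form a basis of the dual, forcing `z = 0`
      push_neg at huniv
      have hRuniv : R = Finset.univ := Finset.eq_univ_iff_forall.mpr huniv
      have hrp : r = p := by rw [hr, hRuniv, Finset.card_univ, Fintype.card_fin]
      have hfinrank : Module.finrank ℝ
          (Module.Dual ℝ (EuclideanSpace ℝ (Fin d) × EuclideanSpace ℝ (Fin d))) = 2 * d := by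
        rw [Subspace.dual_finrank_eq, Module.finrank_prod, finrank_euclideanSpace_fin]
        ring
      have hple : r ≤ 2 * d := by
        have := liw.fintype_card_le_finrank
        rwa [Fintype.card_fin, hfinrank] at this
      have hrcard : Fintype.card (Fin r) = Module.finrank ℝ
          (Module.Dual ℝ (EuclideanSpace ℝ (Fin d) × EuclideanSpace ℝ (Fin d))) := by
        rw [Fintype.card_fin, hfinrank]
        omega
      haveI : Nonempty (Fin r) := ⟨⟨0, by omega⟩⟩
      set b := basisOfLinearIndependentOfCardEqFinrank liw hrcard with hbdef
      have hbcoe : ∀ κ, b κ = phiT T w (ρ κ) := fun κ => by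
        rw [hbdef, coe_basisOfLinearIndependentOfCardEqFinrank]
      have hz0 : z = 0 := by
        rw [← Module.forall_dual_apply_eq_zero_iff ℝ z]
        intro ψ
        have h15 := b.sum_repr ψ
        rw [← h15]
        rw [LinearMap.sum_apply]
        refine Finset.sum_eq_zero fun κ _ => ?_
        rw [LinearMap.smul_apply, hbcoe κ, phiT_apply, hw (ρ κ), smul_zero]
      refine hzne ⟨0, by omega⟩ ?_
      rw [hz0, map_zero]
      rfl

section coorbitlemmas

variable {d : ℕ} {G : Type} [Group G] [Fintype G]
  (U : G →* (EuclideanSpace ℝ (Fin d) ≃ₗᵢ[ℝ] EuclideanSpace ℝ (Fin d)))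

lemma U_inv_apply (g : G) (x : EuclideanSpace ℝ (Fin d)) :
    (U g⁻¹) x = (U g).symm x := by
  have h6 : (U g) * (U g⁻¹) = 1 := by rw [← map_mul, mul_inv_cancel, map_one]
  have h : (U g) ((U g⁻¹) x) = x := by
    calc (U g) ((U g⁻¹) x) = ((U g) * (U g⁻¹)) x := by
          rw [LinearIsometryEquiv.coe_mul]; rfl
      _ = x := by rw [h6]; rfl
  have h7 := congrArg (U g).symm h
  rwa [(U g).symm_apply_apply] at h7

lemma inner_U_symm (g : G) (w x : EuclideanSpace ℝ (Fin d)) :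
    ⟪w, (U g).symm x⟫ = ⟪(U g) w, x⟫ := by
  conv_rhs => rw [← (U g).apply_symm_apply x]
  rw [LinearIsometryEquiv.inner_map_map]

lemma coorbit_orbit (w x : EuclideanSpace ℝ (Fin d)) (g : G) (j : ℕ) :
    coorbit U w ((U g) x) j = coorbit U w x j := by
  unfold coorbit
  have hms : (Finset.univ.val.map fun a : G => ⟪(U a) w, (U g) x⟫)
      = Finset.univ.val.map fun a : G => ⟪(U a) w, x⟫ := by
    have h1 : (fun a : G => ⟪(U a) w, (U g) x⟫)
        = (fun a : G => ⟪(U a) w, x⟫) ∘ (fun a => g⁻¹ * a) := by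
      funext a
      simp only [Function.comp_apply]
      have h2 : (U a) w = (U g) ((U (g⁻¹ * a)) w) := by
        have h3 := map_mul U g (g⁻¹ * a)
        rw [mul_inv_cancel_left] at h3
        rw [h3, LinearIsometryEquiv.coe_mul]
        rfl
      rw [h2, LinearIsometryEquiv.inner_map_map]
    rw [h1, ← Multiset.map_map]
    congr 1
    have h4 : Finset.univ.map (Equiv.mulLeft g⁻¹).toEmbedding = Finset.univ :=
      Finset.map_univ_equiv _
    calc Finset.univ.val.map (fun a : G => g⁻¹ * a)
        = (Finset.univ.map (Equiv.mulLeft g⁻¹).toEmbedding).val := by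
          rw [Finset.map_val]
          rfl
      _ = Finset.univ.val := by rw [h4]
  rw [hms]

lemma coorbit_mem (w x : EuclideanSpace ℝ (Fin d)) {j : ℕ}
    (h1 : 1 ≤ j) (h2 : j ≤ Fintype.card G) :
    ∃ g : G, coorbit U w x j = ⟪(U g) w, x⟫ := by
  set m := Finset.univ.val.map fun g : G => ⟪(U g) w, x⟫ with hm
  set l := m.sort (· ≤ ·) with hl
  have hlen : l.length = Fintype.card G := by
    rw [hl, Multiset.length_sort, hm, Multiset.card_map]
    rfl
  have hidx : Fintype.card G - j < l.length := by rw [hlen]; omega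
  have hco : coorbit U w x j = l.getD (Fintype.card G - j) 0 := rfl
  rw [List.getD_eq_getElem _ _ hidx] at hco
  have hmem : l[Fintype.card G - j] ∈ m := by
    rw [← Multiset.mem_sort (· ≤ ·), ← hl]
    exact List.getElem_mem hidx
  rw [hm] at hmem
  obtain ⟨g, _, hg⟩ := Multiset.mem_map.mp hmem
  exact ⟨g, by rw [hco, ← hg]⟩

/-- The linear map `(x, y) ↦ (U_{g i}⁻¹ x − U_{h i}⁻¹ y)_i`. -/
noncomputable def TB {p : ℕ} (B : Fin p → G × G) :
    (EuclideanSpace ℝ (Fin d) × EuclideanSpace ℝ (Fin d)) →ₗ[ℝ]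
      (Fin p → EuclideanSpace ℝ (Fin d)) where
  toFun z i := (U (B i).1).symm z.1 - (U (B i).2).symm z.2
  map_add' z z' := by
    funext i
    show (U (B i).1).symm (z + z').1 - (U (B i).2).symm (z + z').2 = _
    simp only [Prod.fst_add, Prod.snd_add, map_add, Pi.add_apply]
    abel
  map_smul' c z := by
    funext i
    show (U (B i).1).symm (c • z).1 - (U (B i).2).symm (c • z).2 = _
    simp only [Prod.smul_fst, Prod.smul_snd, _root_.map_smul, Pi.smul_apply, RingHom.id_apply,
      smul_sub]

lemma TB_apply {p : ℕ} (B : Fin p → G × G) (z) (i : Fin p) :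
    TB U B z i = (U (B i).1).symm z.1 - (U (B i).2).symm z.2 := rfl

end coorbitlemmas

/-- for `p ≥ 2d` and `S ⊆ {1,…,N} × {1,…,p}` whose columns `S_i` are all
nonempty, the bad set `F_S` of tuples `w ∈ V^p` for which the coorbit map
`x ↦ (Φ_{w_i,j}(x))_{(j,i) ∈ S}` fails to separate `G`-orbits has Lebesgue measure zero
and is nowhere dense; consequently, for every `w ∉ F_S`, the coorbit map takes equal
values at `x` and `y` iff `x ∼ y`. -/
theorem stmt9 {d : ℕ} (hd : 2 ≤ d) {G : Type} [Group G] [Fintype G]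
    (U : G →* (EuclideanSpace ℝ (Fin d) ≃ₗᵢ[ℝ] EuclideanSpace ℝ (Fin d)))
    (p : ℕ) (hp : 2 * d ≤ p)
    (S : Finset (ℕ × Fin p))
    (hS : ∀ q ∈ S, q.1 ∈ Finset.Icc 1 (Fintype.card G))
    (hSne : ∀ i : Fin p, ∃ j : ℕ, (j, i) ∈ S)
    (F : Set (Fin p → EuclideanSpace ℝ (Fin d)))
    (hF : F = {w : Fin p → EuclideanSpace ℝ (Fin d) | ∃ x y : EuclideanSpace ℝ (Fin d),
      (¬∃ g : G, (U g) x = y) ∧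
      ∀ q ∈ S, coorbit U (w q.2) x q.1 = coorbit U (w q.2) y q.1}) :
    volume F = 0 ∧ IsNowhereDense F ∧
    ∀ w ∉ F, ∀ x y : EuclideanSpace ℝ (Fin d),
      (∀ q ∈ S, coorbit U (w q.2) x q.1 = coorbit U (w q.2) y q.1) ↔
      (∃ g : G, (U g) x = y) := by
  classical
  have hd1 : 1 ≤ d := le_trans one_le_two hd
  choose f hfc hfslot hfne hfvan using fun B : Fin p → G × G => key hd1 hp (TB U B)
  set Bad : Set (Fin p → EuclideanSpace ℝ (Fin d)) :=
    ⋃ B : Fin p → G × G, {w | f B w = 0} with hBad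
  have hBadclosed : IsClosed Bad :=
    isClosed_iUnion_of_finite fun B => isClosed_eq (hfc B) continuous_const
  have hBadnull : volume Bad = 0 :=
    measure_iUnion_null fun B => ml p (f B) (hfc B) (hfslot B) (hfne B)
  have hFBad : F ⊆ Bad := by
    intro w hwF
    rw [hF] at hwF
    obtain ⟨x, y, hxy, heq⟩ := hwF
    choose js hjs using hSne
    have hb : ∀ i, 1 ≤ js i ∧ js i ≤ Fintype.card G := fun i => by
      have := hS _ (hjs i)
      rwa [Finset.mem_Icc] at this
    choose gx hgx using fun i => coorbit_mem U (w i) x (hb i).1 (hb i).2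
    choose gy hgy using fun i => coorbit_mem U (w i) y (hb i).1 (hb i).2
    set B : Fin p → G × G := fun i => (gx i, gy i) with hBdef
    refine Set.mem_iUnion.mpr ⟨B, ?_⟩
    show f B w = 0
    apply hfvan B w (x, y)
    · intro i
      rw [TB_apply]
      intro h0
      apply hxy
      refine ⟨gy i * (gx i)⁻¹, ?_⟩
      have h1 : (U (gx i)).symm x = (U (gy i)).symm y := by
        have := sub_eq_zero.mp h0
        exact this
      have h2 : (U (gy i)) ((U (gx i)).symm x) = y := by
        rw [h1]
        exact (U (gy i)).apply_symm_apply y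
      rw [← h2, map_mul U, LinearIsometryEquiv.coe_mul]
      show (U (gy i)) ((U ((gx i)⁻¹)) x) = _
      rw [U_inv_apply]
    · intro i
      rw [TB_apply]
      show ⟪w i, (U (gx i)).symm x - (U (gy i)).symm y⟫ = 0
      rw [inner_sub_right, inner_U_symm, inner_U_symm, ← hgx i, ← hgy i,
        heq (js i, i) (hjs i), sub_self]
  refine ⟨measure_mono_null hFBad hBadnull, ?_, ?_⟩
  · show interior (closure F) = ∅
    have h1 : closure F ⊆ Bad := hBadclosed.closure_subset_iff.mpr hFBad
    have h3 : interior Bad = ∅ := by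
      by_contra hne
      have h4 : volume (interior Bad) = 0 := measure_mono_null interior_subset hBadnull
      exact (isOpen_interior.measure_ne_zero volume
        (Set.nonempty_iff_ne_empty.mpr hne)) h4
    exact Set.eq_empty_of_subset_empty (h3 ▸ interior_mono h1)
  · intro w hw x y
    constructor
    · intro heq
      by_contra hg
      exact hw (hF ▸ (⟨x, y, hg, heq⟩ : ∃ x y, _))
    · rintro ⟨g, rfl⟩ q hq
      exact (coorbit_orbit U (w q.2) x g q.1).symm
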